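/- arXiv:2107.08584 — 5 statements merged into one kernel-verified Lean document; each statement's English description precedes it below -/
import Mathlib

section
/- Let (A,B) be a pair of perfectly matched sets in a graph G, and let C be a clique of G. If both A ∩ C and B ∩ C are nonempty, then |A ∩ C| = 1 and |B ∩ C| = 1, and the unique vertex of A ∩ C is matched to the unique vertex of B ∩ C. -/
/-- `(A, B)` is a pair of perfectly matched sets in `G`. -/
def IsPMS {V : Type*} (G : SimpleGraph V) (A B : Finset V) : Prop :=
  Disjoint A B ∧ (∀ a ∈ A, ∃! b, b ∈ B ∧ G.Adj a b) ∧ (∀ b ∈ B, ∃! a, a ∈ A ∧ G.Adj b a)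

/-! Two vertices of the clique lying in the disjoint sets `A` and `B` are distinct, hence adjacent.
So a vertex of `B ∩ C` is adjacent to every vertex of `A ∩ C`; since it has only one neighbour in
`A`, the set `A ∩ C` is a singleton, and symmetrically so is `B ∩ C`. -/

namespace IsPMS

variable {V : Type*} {G : SimpleGraph V} {A B : Finset V}

theorem symm (h : IsPMS G A B) : IsPMS G B A :=
  ⟨h.1.symm, h.2.2, h.2.1⟩

theorem eq_of_adj_of_adj (h : IsPMS G A B) {b a a' : V} (hb : b ∈ B) (ha : a ∈ A)
    (ha' : a' ∈ A) (hba : G.Adj b a) (hba' : G.Adj b a') : a = a' :=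
  (h.2.2 b hb).unique ⟨ha, hba⟩ ⟨ha', hba'⟩

theorem adj_of_mem_isClique (h : IsPMS G A B) {C : Set V} (hC : G.IsClique C) {a b : V}
    (ha : a ∈ A) (hb : b ∈ B) (haC : a ∈ C) (hbC : b ∈ C) : G.Adj a b :=
  hC haC hbC (Finset.disjoint_coe.mpr h.1 |>.ne_of_mem ha hb)

variable [DecidableEq V] {C : Finset V}

theorem card_inter_isClique_eq_one (h : IsPMS G A B) (hC : G.IsClique (C : Set V))
    (hAC : (A ∩ C).Nonempty) (hBC : (B ∩ C).Nonempty) : (A ∩ C).card = 1 := by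
  obtain ⟨b, hb⟩ := hBC
  rw [Finset.mem_inter] at hb
  have hsub : (A ∩ C).card ≤ 1 := Finset.card_le_one.mpr fun a ha a' ha' => by
    rw [Finset.mem_inter] at ha ha'
    exact h.eq_of_adj_of_adj hb.1 ha.1 ha'.1
      (h.symm.adj_of_mem_isClique hC hb.1 ha.1 hb.2 ha.2)
      (h.symm.adj_of_mem_isClique hC hb.1 ha'.1 hb.2 ha'.2)
  have hpos := hAC.card_pos
  omega

end IsPMS

/-- If `(A,B)` is a pair of perfectly matched sets and `C` is a clique with both
`A ∩ C` and `B ∩ C` nonempty, then `|A ∩ C| = 1 = |B ∩ C|` and the unique vertex of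
`A ∩ C` is matched to (adjacent to) the unique vertex of `B ∩ C`. -/
theorem pms_clique_intersection {V : Type*} [DecidableEq V] (G : SimpleGraph V)
    (A B C : Finset V) (h : IsPMS G A B)
    (hC : ∀ u ∈ C, ∀ v ∈ C, u ≠ v → G.Adj u v)
    (hAC : (A ∩ C).Nonempty) (hBC : (B ∩ C).Nonempty) :
    (A ∩ C).card = 1 ∧ (B ∩ C).card = 1 ∧
      ∀ a ∈ A ∩ C, ∀ b ∈ B ∩ C, G.Adj a b := by
  have hC' : G.IsClique (C : Set V) := fun u hu v hv => hC u hu v hv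
  refine ⟨h.card_inter_isClique_eq_one hC' hAC hBC,
    h.symm.card_inter_isClique_eq_one hC' hBC hAC, fun a ha b hb => ?_⟩
  rw [Finset.mem_inter] at ha hb
  exact h.adj_of_mem_isClique hC' ha.1 hb.1 ha.2 hb.2
end

section
/- Let (A,B) be a pair of perfectly matched sets in a graph G with |A| = |B| ≥ 2, and suppose V(G) is partitioned into a clique Y and an independent set Z (i.e., G is a split graph). Then it cannot happen that both A ∩ Y ≠ ∅ and B ∩ Y ≠ ∅. -/
/-- In a split graph, whose vertex set is partitioned into a clique `Y` and an independent
set `Z`, a pair of perfectly matched sets `(A,B)` with `|A| = |B| ≥ 2` cannot have both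
`A ∩ Y` and `B ∩ Y` nonempty. -/
theorem pms_split_graph {V : Type*} [Fintype V] [DecidableEq V] (G : SimpleGraph V)
    (Y Z A B : Finset V)
    (hpart : Y ∪ Z = Finset.univ) (hYZ : Disjoint Y Z)
    (hY : ∀ u ∈ Y, ∀ v ∈ Y, u ≠ v → G.Adj u v)
    (hZ : ∀ u ∈ Z, ∀ v ∈ Z, ¬ G.Adj u v)
    (h : IsPMS G A B) (hcard : A.card = B.card) (h2 : 2 ≤ A.card) :
    ¬ ((A ∩ Y).Nonempty ∧ (B ∩ Y).Nonempty) := by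
  rintro ⟨⟨a, ha⟩, ⟨b, hb⟩⟩
  obtain ⟨hdisj, hA, hB⟩ := h
  rw [Finset.mem_inter] at ha hb
  have hmemZ : ∀ v : V, v ∉ Y → v ∈ Z := by
    intro v hv
    have : v ∈ Y ∪ Z := hpart ▸ Finset.mem_univ v
    rcases Finset.mem_union.mp this with h' | h'
    · exact absurd h' hv
    · exact h'
  have hab : a ≠ b := fun e => (Finset.disjoint_left.mp hdisj ha.1) (e ▸ hb.1)
  have hadj : G.Adj a b := hY a ha.2 b hb.2 hab
  -- b is the unique B-neighbor of a; a is the unique A-neighbor of b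
  obtain ⟨b₀, hb₀, hb₀u⟩ := hA a ha.1
  obtain ⟨a₀, ha₀, ha₀u⟩ := hB b hb.1
  have hbb₀ : b = b₀ := hb₀u b ⟨hb.1, hadj⟩
  have haa₀ : a = a₀ := ha₀u a ⟨ha.1, hadj.symm⟩
  -- pick a' ∈ A, a' ≠ a
  obtain ⟨a', ha', hane⟩ : ∃ a' ∈ A, a' ≠ a := by
    by_contra hc
    push_neg at hc
    have : A ⊆ {a} := fun x hx => Finset.mem_singleton.mpr (hc x hx)
    have := Finset.card_le_card this
    simp at this
    omega
  -- a' ∉ Y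
  have ha'Z : a' ∈ Z := by
    apply hmemZ
    intro ha'Y
    have ha'b : a' ≠ b := fun e => (Finset.disjoint_left.mp hdisj ha') (e ▸ hb.1)
    have : G.Adj b a' := (hY a' ha'Y b hb.2 ha'b).symm
    have := ha₀u a' ⟨ha', this⟩
    rw [← haa₀] at this
    exact hane this
  -- partner of a'
  obtain ⟨b', hb', hb'u⟩ := hA a' ha'
  have hb'b : b' ≠ b := by
    intro e
    subst e
    have := ha₀u a' ⟨ha', hb'.2.symm⟩
    rw [← haa₀] at this
    exact hane this
  have hb'Z : b' ∈ Z := by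
    apply hmemZ
    intro hb'Y
    have hab' : a ≠ b' := fun e => (Finset.disjoint_left.mp hdisj ha.1) (e ▸ hb'.1)
    have : G.Adj a b' := hY a ha.2 b' hb'Y hab'
    have := hb₀u b' ⟨hb'.1, this⟩
    rw [← hbb₀] at this
    exact hb'b this
  exact hZ a' ha'Z b' hb'Z hb'.2
end

section
/- Let f be a feasible solution for PMS in a graph G with cluster deletion set X, i.e., (f⁻¹(a), f⁻¹(b)) is a pair of perfectly matched sets with f : V(G) → {a,b,d}, and let C be a maximal clique of G − X. Then exactly one of the following holds: (1) C ∩ f⁻¹(a) ≠ ∅ and C ∩ f⁻¹(b) = ∅; (2) C ∩ f⁻¹(a) = ∅ and C ∩ f⁻¹(b) ≠ ∅; (3) there are two distinct vertices u,v ∈ C with C ∩ f⁻¹(a) = {u} and C ∩ f⁻¹(b) = {v}; (4) C ∩ f⁻¹(a) = ∅ and C ∩ f⁻¹(b) = ∅. -/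
namespace IsPMS

variable {V : Type*} {G : SimpleGraph V} {A B : Finset V}

/-- `w` and `b` are both neighbours of `a`, whose partner in `B` is unique. -/
theorem eq_of_mem_clique_right (h : IsPMS G A B) {S : Set V} (hS : G.IsClique S)
    {a b w : V} (haS : a ∈ S) (haA : a ∈ A) (hbS : b ∈ S) (hbB : b ∈ B)
    (hwS : w ∈ S) (hwB : w ∈ B) : w = b := by
  have hne : ∀ {x}, x ∈ B → a ≠ x := fun hx hax =>
    Finset.disjoint_left.1 h.1 haA (hax ▸ hx)
  obtain ⟨_, _, hunique⟩ := h.2.1 a haA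
  rw [hunique w ⟨hwB, hS haS hwS (hne hwB)⟩, hunique b ⟨hbB, hS haS hbS (hne hbB)⟩]

theorem eq_of_mem_clique_left (h : IsPMS G A B) {S : Set V} (hS : G.IsClique S)
    {a b w : V} (haS : a ∈ S) (haA : a ∈ A) (hbS : b ∈ S) (hbB : b ∈ B)
    (hwS : w ∈ S) (hwA : w ∈ A) : w = a :=
  h.symm.eq_of_mem_clique_right hS hbS hbB haS haA hwS hwA

end IsPMS

theorem pms_cluster_clique_types_general {V : Type*} [Fintype V]
    (G : SimpleGraph V) (C : Finset V) (f : V → Fin 3)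
    (hfeasible : IsPMS G (Finset.univ.filter (fun v => f v = 0))
      (Finset.univ.filter (fun v => f v = 1)))
    (hclique : ∀ u ∈ C, ∀ v ∈ C, u ≠ v → G.Adj u v) :
    ((C.filter (fun v => f v = 0)).Nonempty ∧ C.filter (fun v => f v = 1) = ∅) ∨
    (C.filter (fun v => f v = 0) = ∅ ∧ (C.filter (fun v => f v = 1)).Nonempty) ∨
    (∃ u v, u ≠ v ∧ C.filter (fun w => f w = 0) = {u} ∧ C.filter (fun w => f w = 1) = {v}) ∨
    (C.filter (fun v => f v = 0) = ∅ ∧ C.filter (fun v => f v = 1) = ∅) := by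
  have hC : G.IsClique (C : Set V) := fun u hu v hv huv => hclique u hu v hv huv
  have hmem : ∀ {w} {i : Fin 3}, f w = i → w ∈ Finset.univ.filter (fun v => f v = i) :=
    fun hw => Finset.mem_filter.2 ⟨Finset.mem_univ _, hw⟩
  rcases (C.filter (fun v => f v = 0)).eq_empty_or_nonempty with hA | ⟨u, hu⟩ <;>
    rcases (C.filter (fun v => f v = 1)).eq_empty_or_nonempty with hB | ⟨v, hv⟩
  · exact Or.inr (Or.inr (Or.inr ⟨hA, hB⟩))
  · exact Or.inr (Or.inl ⟨hA, v, hv⟩)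
  · exact Or.inl ⟨⟨u, hu⟩, hB⟩
  · obtain ⟨huC, hu0⟩ := Finset.mem_filter.1 hu
    obtain ⟨hvC, hv1⟩ := Finset.mem_filter.1 hv
    refine Or.inr (Or.inr (Or.inl ⟨u, v, ?_, ?_, ?_⟩))
    · exact ne_of_apply_ne f (by rw [hu0, hv1]; decide)
    · refine Finset.eq_singleton_iff_unique_mem.2 ⟨hu, fun w hw => ?_⟩
      obtain ⟨hwC, hw0⟩ := Finset.mem_filter.1 hw
      exact hfeasible.eq_of_mem_clique_left hC huC (hmem hu0) hvC (hmem hv1) hwC (hmem hw0)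
    · refine Finset.eq_singleton_iff_unique_mem.2 ⟨hv, fun w hw => ?_⟩
      obtain ⟨hwC, hw1⟩ := Finset.mem_filter.1 hw
      exact hfeasible.eq_of_mem_clique_right hC huC (hmem hu0) hvC (hmem hv1) hwC (hmem hw1)

/-- Let `f : V → Fin 3` encode an assignment with values `a = 0`, `b = 1`, `d = 2` which is
a feasible solution (i.e. `(f⁻¹(a), f⁻¹(b))` is a pair of perfectly matched sets), let `X`
be a cluster deletion set (so `G − X` is `P₃`-free, a disjoint union of cliques), and let
`C` be a maximal clique of `G − X`.  Then `C` is of exactly one of the four types: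
(1) `C ∩ f⁻¹(a) ≠ ∅` and `C ∩ f⁻¹(b) = ∅`; (2) `C ∩ f⁻¹(a) = ∅` and `C ∩ f⁻¹(b) ≠ ∅`;
(3) `C ∩ f⁻¹(a) = {u}` and `C ∩ f⁻¹(b) = {v}` for distinct `u, v ∈ C`;
(4) both intersections are empty. -/
theorem pms_cluster_clique_types {V : Type*} [Fintype V] [DecidableEq V]
    (G : SimpleGraph V) (X C : Finset V) (f : V → Fin 3)
    (hfeasible : IsPMS G (Finset.univ.filter (fun v => f v = 0))
      (Finset.univ.filter (fun v => f v = 1)))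
    (hcluster : ∀ u v w : V, u ∉ X → v ∉ X → w ∉ X →
      G.Adj u v → G.Adj v w → u ≠ w → G.Adj u w)
    (hCX : ∀ v ∈ C, v ∉ X)
    (hclique : ∀ u ∈ C, ∀ v ∈ C, u ≠ v → G.Adj u v)
    (hmax : ∀ v : V, v ∉ X → (∀ u ∈ C, u ≠ v → G.Adj u v) → v ∈ C) :
    ((C.filter (fun v => f v = 0)).Nonempty ∧ C.filter (fun v => f v = 1) = ∅) ∨
    (C.filter (fun v => f v = 0) = ∅ ∧ (C.filter (fun v => f v = 1)).Nonempty) ∨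
    (∃ u v, u ≠ v ∧ C.filter (fun w => f w = 0) = {u} ∧ C.filter (fun w => f w = 1) = {v}) ∨
    (C.filter (fun v => f v = 0) = ∅ ∧ C.filter (fun v => f v = 1) = ∅) :=
  pms_cluster_clique_types_general G C f hfeasible hclique
end

section
/- Let (A,B) be a pair of perfectly matched sets in a graph G and let v ∈ A have a pendant neighbor w (a vertex of degree 1 adjacent only to v) with w ∉ A ∪ B. If u ∈ B is the vertex matched to v, then (A, (B \ {u}) ∪ {w}) is also a pair of perfectly matched sets of the same size. -/
open Finset

namespace IsPMS

variable {V : Type*} {G : SimpleGraph V} {A B : Finset V}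

theorem eq_of_adj_left (h : IsPMS G A B) {a b b' : V} (ha : a ∈ A) (hb : b ∈ B) (hb' : b' ∈ B)
    (hab : G.Adj a b) (hab' : G.Adj a b') : b = b' :=
  (h.2.1 a ha).unique ⟨hb, hab⟩ ⟨hb', hab'⟩

theorem eq_of_adj_right (h : IsPMS G A B) {a a' b : V} (hb : b ∈ B) (ha : a ∈ A) (ha' : a' ∈ A)
    (hab : G.Adj a b) (ha'b : G.Adj a' b) : a = a' :=
  (h.2.2 b hb).unique ⟨ha, hab.symm⟩ ⟨ha', ha'b.symm⟩

theorem insert_erase [DecidableEq V] (h : IsPMS G A B) {v u w : V} (hv : v ∈ A) (hu : u ∈ B)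
    (hvu : G.Adj v u) (hwA : w ∉ A) (hw : ∀ a ∈ A, G.Adj w a ↔ a = v) :
    IsPMS G A (insert w (B.erase u)) := by
  refine ⟨disjoint_insert_right.2 ⟨hwA, h.1.mono_right (B.erase_subset u)⟩,
    fun a ha => ?_, fun b hb => ?_⟩
  · by_cases hav : a = v
    · subst hav
      refine ⟨w, ⟨mem_insert_self _ _, ((hw a ha).2 rfl).symm⟩, ?_⟩
      rintro b ⟨hb, hab⟩
      rcases mem_insert.1 hb with rfl | hb
      · rfl
      · exact absurd (h.eq_of_adj_left ha (mem_of_mem_erase hb) hu hab hvu) (ne_of_mem_erase hb)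
    · obtain ⟨b, ⟨hbB, hab⟩, -⟩ := h.2.1 a ha
      have hbu : b ≠ u := fun hbu => hav (h.eq_of_adj_right hu ha hv (hbu ▸ hab) hvu)
      refine ⟨b, ⟨mem_insert_of_mem (mem_erase.2 ⟨hbu, hbB⟩), hab⟩, ?_⟩
      rintro b' ⟨hb', hab'⟩
      rcases mem_insert.1 hb' with rfl | hb'
      · exact absurd ((hw a ha).1 hab'.symm) hav
      · exact h.eq_of_adj_left ha (mem_of_mem_erase hb') hbB hab' hab
  · rcases mem_insert.1 hb with rfl | hb
    · exact ⟨v, ⟨hv, (hw v hv).2 rfl⟩, fun a ⟨ha, hba⟩ => (hw a ha).1 hba⟩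
    · exact h.2.2 b (mem_of_mem_erase hb)

end IsPMS

/-- Pendant swap: if `(A,B)` is a pair of perfectly matched sets, `v ∈ A` has a pendant
neighbor `w` (with `N(w) = {v}`) outside `A ∪ B`, and `u ∈ B` is the vertex matched to `v`,
then `(A, (B \ {u}) ∪ {w})` is also a pair of perfectly matched sets of the same size. -/
theorem pms_pendant_swap {V : Type*} [DecidableEq V] (G : SimpleGraph V)
    (A B : Finset V) (v w u : V) (h : IsPMS G A B)
    (hv : v ∈ A) (hw : ∀ x, G.Adj w x ↔ x = v) (hwAB : w ∉ A ∪ B)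
    (hu : u ∈ B) (hvu : G.Adj v u) :
    IsPMS G A (insert w (B.erase u)) ∧ (insert w (B.erase u)).card = B.card := by
  obtain ⟨hwA, hwB⟩ := notMem_union.1 hwAB
  refine ⟨h.insert_erase hv hu hvu hwA fun a _ => hw a, ?_⟩
  rw [card_insert_of_notMem fun hw' => hwB (mem_of_mem_erase hw'), card_erase_add_one hu]
end

section
/- A set A ⊆ V(G) can be extended to a pair of perfectly matched sets (A,B) for some B if and only if, letting C(A) be the set of vertices in V(G) \ A with exactly one neighbor in A, every vertex of A has at least one neighbor in C(A). -/
section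

variable {V : Type*} {G : SimpleGraph V} {A B : Finset V}

theorem SimpleGraph.card_filter_adj_eq_one_iff [DecidableRel G.Adj] (A : Finset V) (v : V) :
    (A.filter (G.Adj v)).card = 1 ↔ ∃! a, a ∈ A ∧ G.Adj v a := by
  simp only [Finset.card_eq_one_iff_existsUnique, Finset.mem_filter]

theorem IsPMS.notMem_left_of_mem_right (h : IsPMS G A B) {b : V} (hb : b ∈ B) : b ∉ A :=
  fun hbA => Finset.disjoint_left.mp h.1 hbA hb

theorem IsPMS.card_filter_adj_eq_one [DecidableRel G.Adj] (h : IsPMS G A B) {b : V}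
    (hb : b ∈ B) : (A.filter (G.Adj b)).card = 1 :=
  (G.card_filter_adj_eq_one_iff A b).mpr (h.2.2 b hb)

/-- `f` is injective on `A`, since `a` is the only neighbor of `f a` in `A`. -/
theorem isPMS_image [DecidableEq V] (f : V → V) (hf_notMem : ∀ a ∈ A, f a ∉ A)
    (hf_unique : ∀ a ∈ A, ∃! a', a' ∈ A ∧ G.Adj (f a) a')
    (hf_adj : ∀ a ∈ A, G.Adj a (f a)) :
    IsPMS G A (A.image f) := by
  have eq_of_adj : ∀ a ∈ A, ∀ a' ∈ A, G.Adj (f a) a' → a' = a := fun a ha a' ha' hadj =>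
    (hf_unique a ha).unique ⟨ha', hadj⟩ ⟨ha, (hf_adj a ha).symm⟩
  refine ⟨?_, fun a ha => ?_, ?_⟩
  · exact Finset.disjoint_left.mpr fun a haA haB => by
      obtain ⟨a', ha', rfl⟩ := Finset.mem_image.mp haB
      exact hf_notMem a' ha' haA
  · refine ⟨f a, ⟨Finset.mem_image_of_mem f ha, hf_adj a ha⟩, ?_⟩
    rintro _ ⟨hb, hab⟩
    obtain ⟨a', ha', rfl⟩ := Finset.mem_image.mp hb
    rw [eq_of_adj a' ha' a ha hab.symm]
  · simp only [Finset.forall_mem_image]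
    exact fun a ha =>
      ⟨a, ⟨ha, (hf_adj a ha).symm⟩, fun a' ⟨ha', hadj⟩ => eq_of_adj a ha a' ha' hadj⟩

end

/-- `A` can be extended to a pair of perfectly matched sets `(A,B)` iff every vertex of `A`
has a neighbor in `C(A)`, the set of vertices outside `A` with exactly one neighbor in `A`. -/
theorem pms_extension_iff {V : Type*} [Fintype V] [DecidableEq V]
    (G : SimpleGraph V) [DecidableRel G.Adj] (A : Finset V) :
    (∃ B : Finset V, IsPMS G A B) ↔
    (∀ a ∈ A, ∃ v ∈ Finset.univ.filter
        (fun v => v ∉ A ∧ (A.filter (fun x => G.Adj v x)).card = 1),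
      G.Adj a v) := by
  simp only [Finset.mem_filter, Finset.mem_univ, true_and]
  constructor
  · rintro ⟨B, hB⟩ a ha
    obtain ⟨b, ⟨hb, hab⟩, -⟩ := hB.2.1 a ha
    exact ⟨b, ⟨hB.notMem_left_of_mem_right hb, hB.card_filter_adj_eq_one hb⟩, hab⟩
  · intro h
    choose! f hf hf_adj using h
    refine ⟨A.image f, isPMS_image f (fun a ha => (hf a ha).1) (fun a ha => ?_) hf_adj⟩
    exact (G.card_filter_adj_eq_one_iff A (f a)).mp (hf a ha).2
end
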